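/- arXiv:2604.27670 — 3 statements merged into one kernel-verified Lean document; each statement's English description precedes it below -/
import Mathlib

section
/- Let μ ∈ ℝ and suppose u, p^t, p^x : ℝ² → ℝ are smooth with u_t = −2p^x + 4u p^t + μ, u_x = −2p^t, and ∂_t p^t + ∂_x p^x = −2(p^t)² − 2μ p^t. Then u satisfies the dissipative Hunter–Saxton equation u_tx + u u_xx + ½ u_x² + μ u_x = 0. -/
open ContinuousLinearMap

/-- Derivative along the first coordinate as an `fderiv` application. -/
lemma deriv_fst_eq (g : ℝ × ℝ → ℝ) (t x : ℝ) (hg : DifferentiableAt ℝ g (t, x)) :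
    deriv (fun s => g (s, x)) t = fderiv ℝ g (t, x) (1, 0) := by
  have hc : HasDerivAt (fun s : ℝ => (s, x)) ((1 : ℝ), (0 : ℝ)) t :=
    (hasDerivAt_id t).prodMk (hasDerivAt_const t x)
  exact (hg.hasFDerivAt.comp_hasDerivAt t hc).deriv

/-- Derivative along the second coordinate as an `fderiv` application. -/
lemma deriv_snd_eq (g : ℝ × ℝ → ℝ) (t x : ℝ) (hg : DifferentiableAt ℝ g (t, x)) :
    deriv (fun y => g (t, y)) x = fderiv ℝ g (t, x) (0, 1) := by
  have hc : HasDerivAt (fun y : ℝ => (t, y)) ((0 : ℝ), (1 : ℝ)) x :=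
    (hasDerivAt_const x t).prodMk (hasDerivAt_id x)
  exact (hg.hasFDerivAt.comp_hasDerivAt x hc).deriv

/-- Mixed partial derivatives commute for smooth functions of two real variables. -/
lemma deriv_deriv_swap (F : ℝ → ℝ → ℝ)
    (hF : ContDiff ℝ (⊤ : ℕ∞) (fun q : ℝ × ℝ => F q.1 q.2)) (t x : ℝ) :
    deriv (fun s => deriv (fun y => F s y) x) t
      = deriv (fun y => deriv (fun s => F s y) t) x := by
  set f : ℝ × ℝ → ℝ := fun q => F q.1 q.2 with hf
  have hdiff : Differentiable ℝ f := hF.differentiable (by simp)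
  -- the two "partial derivative" fields
  have hG2 : ContDiff ℝ (⊤ : ℕ∞) (fun q : ℝ × ℝ => fderiv ℝ f q ((0 : ℝ), (1 : ℝ))) :=
    (hF.fderiv_right (by simp)).clm_apply contDiff_const
  have hG1 : ContDiff ℝ (⊤ : ℕ∞) (fun q : ℝ × ℝ => fderiv ℝ f q ((1 : ℝ), (0 : ℝ))) :=
    (hF.fderiv_right (by simp)).clm_apply contDiff_const
  -- symmetry of the second derivative
  have hsymm : IsSymmSndFDerivAt ℝ f (t, x) :=
    (hF.contDiffAt).isSymmSndFDerivAt (by rw [minSmoothness_of_isRCLikeNormedField]; exact WithTop.coe_le_coe.mpr le_top)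
  -- rewrite LHS
  have l1 : (fun s => deriv (fun y => F s y) x)
      = fun s => fderiv ℝ f (s, x) ((0 : ℝ), (1 : ℝ)) := by
    funext s
    exact deriv_snd_eq f s x (hdiff _)
  have l2 : (fun y => deriv (fun s => F s y) t)
      = fun y => fderiv ℝ f (t, y) ((1 : ℝ), (0 : ℝ)) := by
    funext y
    exact deriv_fst_eq f t y (hdiff _)
  rw [l1, l2,
    deriv_fst_eq _ t x (hG2.differentiable (by simp) _),
    deriv_snd_eq _ t x (hG1.differentiable (by simp) _)]
  -- compute the fderivs of the evaluated derivative fields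
  have hf'' : HasFDerivAt (fderiv ℝ f) (fderiv ℝ (fderiv ℝ f) (t, x)) (t, x) :=
    ((hF.fderiv_right (m := (⊤ : ℕ∞)) (by simp)).differentiable (by simp) _).hasFDerivAt
  have e2 : fderiv ℝ (fun q : ℝ × ℝ => fderiv ℝ f q ((0 : ℝ), (1 : ℝ))) (t, x) ((1 : ℝ), (0 : ℝ))
      = fderiv ℝ (fderiv ℝ f) (t, x) ((1 : ℝ), (0 : ℝ)) ((0 : ℝ), (1 : ℝ)) := by
    have := (ContinuousLinearMap.apply ℝ ℝ ((0 : ℝ), (1 : ℝ))).hasFDerivAt.comp (t, x) hf''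
    simpa [Function.comp_def] using congrArg (fun (L : (ℝ × ℝ) →L[ℝ] ℝ) => L ((1 : ℝ), (0 : ℝ))) this.fderiv
  have e1 : fderiv ℝ (fun q : ℝ × ℝ => fderiv ℝ f q ((1 : ℝ), (0 : ℝ))) (t, x) ((0 : ℝ), (1 : ℝ))
      = fderiv ℝ (fderiv ℝ f) (t, x) ((0 : ℝ), (1 : ℝ)) ((1 : ℝ), (0 : ℝ)) := by
    have := (ContinuousLinearMap.apply ℝ ℝ ((1 : ℝ), (0 : ℝ))).hasFDerivAt.comp (t, x) hf''
    simpa [Function.comp_def] using congrArg (fun (L : (ℝ × ℝ) →L[ℝ] ℝ) => L ((0 : ℝ), (1 : ℝ))) this.fderiv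
  rw [e1, e2]
  exact hsymm _ _

/-- Partial maps of a smooth two-variable function are differentiable. -/
lemma diff_fst (F : ℝ → ℝ → ℝ)
    (hF : ContDiff ℝ (⊤ : ℕ∞) (fun q : ℝ × ℝ => F q.1 q.2)) (t x : ℝ) :
    DifferentiableAt ℝ (fun s => F s x) t := by
  have : ContDiff ℝ (⊤ : ℕ∞) (fun s : ℝ => F s x) :=
    hF.comp (contDiff_id.prodMk contDiff_const)
  exact (this.differentiable (by simp)) t

lemma diff_snd (F : ℝ → ℝ → ℝ)
    (hF : ContDiff ℝ (⊤ : ℕ∞) (fun q : ℝ × ℝ => F q.1 q.2)) (t x : ℝ) :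
    DifferentiableAt ℝ (fun y => F t y) x := by
  have : ContDiff ℝ (⊤ : ℕ∞) (fun y : ℝ => F t y) :=
    hF.comp (contDiff_const.prodMk contDiff_id)
  exact (this.differentiable (by simp)) x

/-- eliminating the polymomenta from the HdDW equations for the
dissipative Hunter–Saxton Hamiltonian yields u_tx + u·u_xx + ½u_x² + μu_x = 0. -/
theorem hunter_saxton_from_HdDW
    (μ : ℝ)
    (u pt px : ℝ → ℝ → ℝ)
    (hu : ContDiff ℝ (⊤ : ℕ∞) (fun q : ℝ × ℝ => u q.1 q.2))
    (hpt : ContDiff ℝ (⊤ : ℕ∞) (fun q : ℝ × ℝ => pt q.1 q.2))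
    (hpx : ContDiff ℝ (⊤ : ℕ∞) (fun q : ℝ × ℝ => px q.1 q.2))
    (h1 : ∀ t x, deriv (fun s => u s x) t = -2 * px t x + 4 * u t x * pt t x + μ)
    (h2 : ∀ t x, deriv (fun y => u t y) x = -2 * pt t x)
    (h3 : ∀ t x, deriv (fun s => pt s x) t + deriv (fun y => px t y) x
        = -2 * (pt t x) ^ 2 - 2 * μ * pt t x) :
    ∀ t x,
      deriv (fun s => deriv (fun y => u s y) x) t
        + u t x * deriv (fun y => deriv (fun y' => u t y') y) x
        + (1 / 2) * (deriv (fun y => u t y) x) ^ 2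
        + μ * deriv (fun y => u t y) x = 0 := by
  intro t x
  set a := pt t x with ha
  set ptt := deriv (fun s => pt s x) t with hptt
  set ptx := deriv (fun y => pt t y) x with hptx
  set pxx := deriv (fun y => px t y) x with hpxx
  -- first target term: u_tx = -2 ∂_t pt
  have E1 : deriv (fun s => deriv (fun y => u s y) x) t = -2 * ptt := by
    have : (fun s => deriv (fun y => u s y) x) = fun s => -2 * pt s x := by
      funext s; exact h2 s x
    rw [this, deriv_const_mul _ (diff_fst pt hpt t x)]
  -- second target term: u_xx = -2 ∂_x pt
  have E2 : deriv (fun y => deriv (fun y' => u t y') y) x = -2 * ptx := by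
    have : (fun y => deriv (fun y' => u t y') y) = fun y => -2 * pt t y := by
      funext y; exact h2 t y
    rw [this, deriv_const_mul _ (diff_snd pt hpt t x)]
  -- symmetry: differentiate h1 in x and equate with -2 ∂_t pt
  have E3 : -2 * ptt = -2 * pxx + 4 * ((-2 * a) * a + u t x * ptx) := by
    have hswap := deriv_deriv_swap u hu t x
    rw [E1] at hswap
    have hrw : (fun y => deriv (fun s => u s y) t)
        = fun y => -2 * px t y + 4 * (u t y * pt t y) + μ := by
      funext y; rw [h1 t y]; ring
    rw [hrw] at hswap
    have d1 : DifferentiableAt ℝ (fun y => -2 * px t y) x :=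
      (diff_snd px hpx t x).const_mul _
    have d2 : DifferentiableAt ℝ (fun y => u t y * pt t y) x :=
      (diff_snd u hu t x).mul (diff_snd pt hpt t x)
    have d2' : DifferentiableAt ℝ (fun y => 4 * (u t y * pt t y)) x := d2.const_mul _
    rw [deriv_add_const, deriv_fun_add d1 d2', deriv_const_mul _ (diff_snd px hpx t x),
      deriv_const_mul _ d2, deriv_fun_mul (diff_snd u hu t x) (diff_snd pt hpt t x),
      h2 t x] at hswap
    linarith [hswap]
  have E4 : ptt + pxx = -2 * a ^ 2 - 2 * μ * a := h3 t x
  rw [E1, E2, h2 t x]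
  nlinarith [E3, E4]
end

section
/- Let μ > 0, c ∈ ℝ, A ∈ ℝ, and work on a connected open interval I ⊂ ℝ where u + c > 0. Define γ_u^t(u) = μ + A/√(u+c) and γ^t(u) = μ(u+c) + 2A√(u+c) + A²/μ. Then (γ^t)'(u) = γ_u^t(u) on I, and −(u+c)(γ_u^t(u))² + μ γ^t(u) = 0 on I. -/
/-!
Writing `s = √(u + c)`, both `(u + c) (γ_u^t)²` and `μ γ^t` equal `(μ s + A)²`, which is the
Hamilton–Jacobi equation; the derivative of `γ^t` is read off from `(√x)' = 1 / (2 √x)`.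
-/

open Real

section
variable {μ A x : ℝ}

lemma hasDerivAt_mul_add_two_mul_sqrt_add_const (hx : 0 < x) :
    HasDerivAt (fun x => μ * x + 2 * A * √x + A ^ 2 / μ) (μ + A / √x) x := by
  have hsqrt : HasDerivAt (fun x => √x) (1 / (2 * √x)) x := by
    simpa using (hasDerivAt_id x).sqrt hx.ne'
  have hs : √x ≠ 0 := (sqrt_pos.mpr hx).ne'
  refine ((((hasDerivAt_id' x).const_mul μ).add (hsqrt.const_mul (2 * A))).add_const
    (A ^ 2 / μ)).congr_deriv ?_
  field_simp

lemma mul_add_div_sqrt_sq (hx : 0 < x) : x * (μ + A / √x) ^ 2 = (μ * √x + A) ^ 2 := by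
  have hs : √x ≠ 0 := (sqrt_pos.mpr hx).ne'
  calc x * (μ + A / √x) ^ 2 = √x ^ 2 * (μ + A / √x) ^ 2 := by rw [sq_sqrt hx.le]
    _ = (μ * √x + A) ^ 2 := by field_simp

lemma mul_sqrt_add_sq_div (hμ : μ ≠ 0) (hx : 0 ≤ x) :
    (μ * √x + A) ^ 2 / μ = μ * x + 2 * A * √x + A ^ 2 / μ := by
  field_simp
  linear_combination μ ^ 2 * sq_sqrt hx

end

theorem hunter_saxton_HJ_explicit_family_general
    (μ c A : ℝ) (hμ : 0 < μ)
    (I : Set ℝ)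
    (hpos : ∀ u ∈ I, 0 < u + c) :
    let γut : ℝ → ℝ := fun u => μ + A / Real.sqrt (u + c)
    let γt : ℝ → ℝ := fun u => μ * (u + c) + 2 * A * Real.sqrt (u + c) + A ^ 2 / μ
    ∀ u ∈ I, deriv γt u = γut u ∧ -(u + c) * (γut u) ^ 2 + μ * γt u = 0 := by
  intro γut γt u hu
  have hx : 0 < u + c := hpos u hu
  refine ⟨(hasDerivAt_mul_add_two_mul_sqrt_add_const hx).comp_add_const u c |>.deriv, ?_⟩
  calc -(u + c) * γut u ^ 2 + μ * γt u
      = -(μ * √(u + c) + A) ^ 2 + μ * ((μ * √(u + c) + A) ^ 2 / μ) := by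
        rw [neg_mul, mul_add_div_sqrt_sq hx, mul_sqrt_add_sq_div hμ.ne' hx.le]
    _ = 0 := by field_simp; ring

/-- explicit solution family of the reduced standard z-independent
Hamilton–Jacobi equation for the dissipative Hunter–Saxton Hamiltonian. -/
theorem hunter_saxton_HJ_explicit_family
    (μ c A : ℝ) (hμ : 0 < μ)
    (I : Set ℝ) (hI : IsOpen I) (hconn : IsConnected I)
    (hpos : ∀ u ∈ I, 0 < u + c) :
    let γut : ℝ → ℝ := fun u => μ + A / Real.sqrt (u + c)
    let γt : ℝ → ℝ := fun u => μ * (u + c) + 2 * A * Real.sqrt (u + c) + A ^ 2 / μ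
    ∀ u ∈ I, deriv γt u = γut u ∧ -(u + c) * (γut u) ^ 2 + μ * γt u = 0 :=
  hunter_saxton_HJ_explicit_family_general μ c A hμ I hpos
end

section
/- Let n, k ≥ 1 and let h : ℝ^n × ℝ^{nk} × ℝ^k → ℝ be smooth of the form h(q, p, z) = g(q, p) + Σ_α A_α z^α with constants A_α ∈ ℝ. Suppose (q^i(t), p_i^α(t), z^α(t)) and (q̃^i(t), p̃_i^α(t), z̃^α(t)) satisfy respectively the standard HdDW equations (∂q^i/∂t^β = ∂h/∂p_i^β, Σ_α ∂p_i^α/∂t^α = −(∂h/∂q^i + Σ_α p_i^α ∂h/∂z^α), Σ_α ∂z^α/∂t^α = Σ_{α,j} p_j^α ∂h/∂p_j^α − h) and the evolution HdDW equations (same first two families, Σ_α ∂z^α/∂t^α = Σ_{α,j} p_j^α ∂h/∂p_j^α). Then the pairs (q, p) and (q̃, p̃) satisfy identical first-order systems: ∂q^i/∂t^β = ∂g/∂p_i^β and Σ_α ∂p_i^α/∂t^α = −∂g/∂q^i − Σ_α A_α p_i^α, and the same holds for (q̃, p̃). -/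
open scoped BigOperators

lemma affine_fderiv_single {k : ℕ} (A : Fin k → ℝ) (c : ℝ) (zt : Fin k → ℝ) (α : Fin k) :
    fderiv ℝ (fun Z : Fin k → ℝ => c + ∑ β, A β * Z β) zt (Pi.single α 1) = A α := by
  have hL : HasFDerivAt (fun Z : Fin k → ℝ => ∑ β, A β * Z β)
      (∑ β, A β • (ContinuousLinearMap.proj β : (Fin k → ℝ) →L[ℝ] ℝ)) zt := by
    have := HasFDerivAt.fun_sum (u := (Finset.univ : Finset (Fin k)))
      (A := fun (β : Fin k) (Z : Fin k → ℝ) => A β * Z β)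
      (A' := fun β => A β • (ContinuousLinearMap.proj β : (Fin k → ℝ) →L[ℝ] ℝ))
      (x := zt) (fun β _ => ((ContinuousLinearMap.proj β :
        (Fin k → ℝ) →L[ℝ] ℝ).hasFDerivAt.const_mul (A β)))
    simpa using this
  rw [fderiv_const_add, hL.fderiv]
  simp [ContinuousLinearMap.sum_apply, Pi.single_apply, mul_comm]

/-- for Hamiltonians h(q,p,z) = g(q,p) + Σ_α A_α z^α affine in the
dissipative variables, the standard and the evolution HdDW equations impose
exactly the same first-order system on the (q,p) variables. -/
theorem affine_hamiltonian_same_first_order_system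
    (n k : ℕ) (hn : 1 ≤ n) (hk : 1 ≤ k)
    (g : (Fin n → ℝ) → (Fin n → Fin k → ℝ) → ℝ)
    (hg : ContDiff ℝ (⊤ : ℕ∞) (fun qp : (Fin n → ℝ) × (Fin n → Fin k → ℝ) => g qp.1 qp.2))
    (A : Fin k → ℝ)
    (q : (Fin k → ℝ) → Fin n → ℝ) (p : (Fin k → ℝ) → Fin n → Fin k → ℝ)
    (z : (Fin k → ℝ) → Fin k → ℝ)
    (q' : (Fin k → ℝ) → Fin n → ℝ) (p' : (Fin k → ℝ) → Fin n → Fin k → ℝ)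
    (z' : (Fin k → ℝ) → Fin k → ℝ)
    -- standard HdDW equations for (q, p, z):
    (hq : ∀ (t : Fin k → ℝ) (i : Fin n) (β : Fin k),
      fderiv ℝ (fun s => q s i) t (Pi.single β 1)
        = fderiv ℝ (fun P => g (q t) P + ∑ α, A α * z t α) (p t)
            (Pi.single i (Pi.single β 1)))
    (hp : ∀ (t : Fin k → ℝ) (i : Fin n),
      ∑ α, fderiv ℝ (fun s => p s i α) t (Pi.single α 1)
        = -(fderiv ℝ (fun Q => g Q (p t) + ∑ α, A α * z t α) (q t) (Pi.single i 1)
          + ∑ α, p t i α *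
              fderiv ℝ (fun Z => g (q t) (p t) + ∑ β, A β * Z β) (z t)
                (Pi.single α 1)))
    (hz : ∀ (t : Fin k → ℝ),
      ∑ α, fderiv ℝ (fun s => z s α) t (Pi.single α 1)
        = (∑ α, ∑ j, p t j α *
            fderiv ℝ (fun P => g (q t) P + ∑ β, A β * z t β) (p t)
              (Pi.single j (Pi.single α 1)))
          - (g (q t) (p t) + ∑ α, A α * z t α))
    -- evolution HdDW equations for (q', p', z'):
    (hq' : ∀ (t : Fin k → ℝ) (i : Fin n) (β : Fin k),
      fderiv ℝ (fun s => q' s i) t (Pi.single β 1)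
        = fderiv ℝ (fun P => g (q' t) P + ∑ α, A α * z' t α) (p' t)
            (Pi.single i (Pi.single β 1)))
    (hp' : ∀ (t : Fin k → ℝ) (i : Fin n),
      ∑ α, fderiv ℝ (fun s => p' s i α) t (Pi.single α 1)
        = -(fderiv ℝ (fun Q => g Q (p' t) + ∑ α, A α * z' t α) (q' t) (Pi.single i 1)
          + ∑ α, p' t i α *
              fderiv ℝ (fun Z => g (q' t) (p' t) + ∑ β, A β * Z β) (z' t)
                (Pi.single α 1)))
    (hz' : ∀ (t : Fin k → ℝ),
      ∑ α, fderiv ℝ (fun s => z' s α) t (Pi.single α 1)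
        = ∑ α, ∑ j, p' t j α *
            fderiv ℝ (fun P => g (q' t) P + ∑ β, A β * z' t β) (p' t)
              (Pi.single j (Pi.single α 1))) :
    -- both pairs satisfy the identical first-order system in terms of g:
    ((∀ (t : Fin k → ℝ) (i : Fin n) (β : Fin k),
        fderiv ℝ (fun s => q s i) t (Pi.single β 1)
          = fderiv ℝ (fun P => g (q t) P) (p t) (Pi.single i (Pi.single β 1))) ∧
      (∀ (t : Fin k → ℝ) (i : Fin n),
        ∑ α, fderiv ℝ (fun s => p s i α) t (Pi.single α 1)
          = -(fderiv ℝ (fun Q => g Q (p t)) (q t) (Pi.single i 1))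
            - ∑ α, A α * p t i α)) ∧
    ((∀ (t : Fin k → ℝ) (i : Fin n) (β : Fin k),
        fderiv ℝ (fun s => q' s i) t (Pi.single β 1)
          = fderiv ℝ (fun P => g (q' t) P) (p' t) (Pi.single i (Pi.single β 1))) ∧
      (∀ (t : Fin k → ℝ) (i : Fin n),
        ∑ α, fderiv ℝ (fun s => p' s i α) t (Pi.single α 1)
          = -(fderiv ℝ (fun Q => g Q (p' t)) (q' t) (Pi.single i 1))
            - ∑ α, A α * p' t i α)) := by
  refine ⟨⟨?_, ?_⟩, ?_, ?_⟩
  · intro t i β; rw [hq t i β, fderiv_add_const]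
  · intro t i
    rw [hp t i, fderiv_add_const]
    simp only [affine_fderiv_single]
    have h' : ∀ α, p t i α * A α = A α * p t i α := fun α => mul_comm _ _
    simp only [h']
    ring
  · intro t i β; rw [hq' t i β, fderiv_add_const]
  · intro t i
    rw [hp' t i, fderiv_add_const]
    simp only [affine_fderiv_single]
    have h' : ∀ α, p' t i α * A α = A α * p' t i α := fun α => mul_comm _ _
    simp only [h']
    ring
end
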